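/- For 1 ≤ l < m ≤ n and x ∈ Γ_{m-1}^+ ⊂ ℝ^n, the Newton–Maclaurin inequality holds: σ_m(x) ≤ C(n,m) · (σ_l(x)/C(n,l))^{m/l}, with equality if and only if x = c(1,…,1) for some constant c > 0. -/

import Mathlib

/-- The `k`-th elementary symmetric polynomial of `x : Fin n → ℝ`. -/
def esymm (n k : ℕ) (x : Fin n → ℝ) : ℝ :=
  ∑ s ∈ (Finset.univ : Finset (Fin n)).powersetCard k, ∏ i ∈ s, x i

private lemma esymm_multiset (n k : ℕ) (x : Fin n → ℝ) :
    (Multiset.map x Finset.univ.val).esymm k = esymm n k x := by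
  rw [Finset.esymm_map_val]; rfl

private lemma esymm_zero' (n : ℕ) (x : Fin n → ℝ) : esymm n 0 x = 1 := by
  simp [esymm, Finset.powersetCard_zero]

private lemma esymm_one' (n : ℕ) (x : Fin n → ℝ) : esymm n 1 x = ∑ i, x i := by
  simp [esymm, Finset.powersetCard_one]

private lemma esymm_self (n : ℕ) (x : Fin n → ℝ) : esymm n n x = ∏ i, x i := by
  have h : (Finset.univ : Finset (Fin n)).powersetCard n = {Finset.univ} := by
    have := Finset.powersetCard_self (Finset.univ : Finset (Fin n))
    rwa [Finset.card_univ, Fintype.card_fin] at this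
  simp [esymm, h]

private lemma esymm_const (n j : ℕ) (c : ℝ) :
    esymm n j (fun _ => c) = (n.choose j : ℝ) * c ^ j := by
  unfold esymm
  rw [Finset.sum_congr rfl (fun A hA => by
    rw [Finset.prod_const, (Finset.mem_powersetCard.mp hA).2]), Finset.sum_const,
    Finset.card_powersetCard, Finset.card_univ, Fintype.card_fin, nsmul_eq_mul]

private lemma esymm_compl (n j : ℕ) (hj : j ≤ n) (x : Fin n → ℝ) :
    esymm n (n - j) x
      = ∑ A ∈ (Finset.univ : Finset (Fin n)).powersetCard j, ∏ k ∈ Aᶜ, x k := by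
  unfold esymm
  refine Finset.sum_nbij' (fun A => Aᶜ) (fun A => Aᶜ) ?_ ?_ ?_ ?_ ?_
  · intro A hA
    rw [Finset.mem_powersetCard_univ] at hA ⊢
    rw [Finset.card_compl, Fintype.card_fin, hA, Nat.sub_sub_self hj]
  · intro A hA
    rw [Finset.mem_powersetCard_univ] at hA ⊢
    rw [Finset.card_compl, Fintype.card_fin, hA]
  · intro A _; exact compl_compl A
  · intro A _; exact compl_compl A
  · intro A hA
    rw [compl_compl]
open Finset

private lemma two_esymm_two (n : ℕ) (y : Fin n → ℝ) :
    2 * esymm n 2 y = (∑ i, y i)^2 - ∑ i, (y i)^2 := by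
  have h1 : ∑ p ∈ (univ : Finset (Fin n)).offDiag, y p.1 * y p.2
      = (∑ i, y i)^2 - ∑ i, (y i)^2 := by
    have hsq : (∑ i, y i)^2 = ∑ p ∈ (univ : Finset (Fin n)) ×ˢ univ, y p.1 * y p.2 := by
      rw [sq, Finset.sum_mul_sum, Finset.sum_product]
    have hsplit : (univ : Finset (Fin n)).diag ∪ (univ : Finset (Fin n)).offDiag
        = univ ×ˢ univ := Finset.diag_union_offDiag univ
    rw [hsq, ← hsplit, Finset.sum_union (Finset.disjoint_diag_offDiag univ),
      Finset.sum_diag]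
    have : ∑ i : Fin n, y i * y i = ∑ i, (y i)^2 := by
      refine Finset.sum_congr rfl fun i _ => (sq (y i)).symm
    rw [this]; ring
  have h2 : ∑ p ∈ (univ : Finset (Fin n)).offDiag, y p.1 * y p.2
      = 2 * esymm n 2 y := by
    have key := Finset.sum_comp (s := (univ : Finset (Fin n)).offDiag)
      (f := fun A : Finset (Fin n) => ∏ k ∈ A, y k)
      (g := fun p : Fin n × Fin n => ({p.1, p.2} : Finset (Fin n)))
    have himg : Finset.image (fun p : Fin n × Fin n => ({p.1, p.2} : Finset (Fin n)))
        (univ : Finset (Fin n)).offDiag = (univ : Finset (Fin n)).powersetCard 2 := by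
      ext A
      simp only [Finset.mem_image, Finset.mem_powersetCard_univ]
      constructor
      · rintro ⟨p, hp, rfl⟩
        exact Finset.card_pair (Finset.mem_offDiag.mp hp).2.2
      · intro hA
        obtain ⟨i, j, hij, rfl⟩ := Finset.card_eq_two.mp hA
        exact ⟨(i, j), Finset.mem_offDiag.mpr ⟨Finset.mem_univ _, Finset.mem_univ _, hij⟩, rfl⟩
    have hfib : ∀ A ∈ (univ : Finset (Fin n)).powersetCard 2,
        ((univ : Finset (Fin n)).offDiag.filter
          (fun p => ({p.1, p.2} : Finset (Fin n)) = A)).card = 2 := by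
      intro A hA
      rw [Finset.mem_powersetCard_univ] at hA
      obtain ⟨i, j, hij, rfl⟩ := Finset.card_eq_two.mp hA
      have : (univ : Finset (Fin n)).offDiag.filter
          (fun p => ({p.1, p.2} : Finset (Fin n)) = {i, j})
          = {(i, j), (j, i)} := by
        ext p
        simp only [Finset.mem_filter, Finset.mem_offDiag, Finset.mem_univ, true_and,
          Finset.mem_insert, Finset.mem_singleton]
        constructor
        · rintro ⟨hne, hset⟩
          have h1 : p.1 ∈ ({i, j} : Finset (Fin n)) := by
            rw [← hset]; exact Finset.mem_insert_self _ _
          have h2 : p.2 ∈ ({i, j} : Finset (Fin n)) := by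
            rw [← hset]; exact Finset.mem_insert.mpr (Or.inr (Finset.mem_singleton_self _))
          simp only [Finset.mem_insert, Finset.mem_singleton] at h1 h2
          rcases h1 with h1 | h1 <;> rcases h2 with h2 | h2
          · exact absurd (h1.trans h2.symm) hne
          · left; exact Prod.ext h1 h2
          · right; exact Prod.ext h1 h2
          · exact absurd (h1.trans h2.symm) hne
        · rintro (rfl | rfl)
          · exact ⟨hij, rfl⟩
          · exact ⟨hij.symm, by rw [Finset.pair_comm]⟩
      rw [this, Finset.card_insert_of_notMem, Finset.card_singleton]
      simp only [Finset.mem_singleton]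
      intro hcontra
      exact hij (congrArg Prod.fst hcontra)
    have hval : ∀ p ∈ (univ : Finset (Fin n)).offDiag,
        (∏ k ∈ ({p.1, p.2} : Finset (Fin n)), y k) = y p.1 * y p.2 := by
      intro p hp
      exact Finset.prod_pair (Finset.mem_offDiag.mp hp).2.2
    calc ∑ p ∈ (univ : Finset (Fin n)).offDiag, y p.1 * y p.2
        = ∑ p ∈ (univ : Finset (Fin n)).offDiag,
            ∏ k ∈ ({p.1, p.2} : Finset (Fin n)), y k :=
          (Finset.sum_congr rfl hval).symm
      _ = ∑ A ∈ Finset.image (fun p : Fin n × Fin n => ({p.1, p.2} : Finset (Fin n)))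
            (univ : Finset (Fin n)).offDiag,
            ((univ : Finset (Fin n)).offDiag.filter
              (fun p => ({p.1, p.2} : Finset (Fin n)) = A)).card • ∏ k ∈ A, y k := key
      _ = ∑ A ∈ (univ : Finset (Fin n)).powersetCard 2, 2 * ∏ k ∈ A, y k := by
          rw [himg]
          refine Finset.sum_congr rfl fun A hA => ?_
          rw [hfib A hA]; simp
      _ = 2 * esymm n 2 y := by rw [← Finset.mul_sum]; rfl
  rw [← h2, h1]

open Finset in
private lemma nm_sum_sq_identity (n : ℕ) (y : Fin n → ℝ) :
    ∑ i, ∑ j, (y i - y j)^2 = 2*((n : ℝ) * ∑ i, (y i)^2 - (∑ i, y i)^2) := by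
  have h : ∀ i : Fin n, ∑ j, (y i - y j)^2
      = (n : ℝ) * (y i)^2 - 2 * (y i * ∑ j, y j) + ∑ j, (y j)^2 := by
    intro i
    have : ∀ j : Fin n, (y i - y j)^2 = (y i)^2 - 2*(y i * y j) + (y j)^2 := by
      intro j; ring
    rw [Finset.sum_congr rfl (fun j _ => this j)]
    rw [Finset.sum_add_distrib, Finset.sum_sub_distrib, Finset.sum_const,
      Finset.card_univ, Fintype.card_fin, nsmul_eq_mul]
    have : ∑ j : Fin n, 2 * (y i * y j) = 2 * (y i * ∑ j, y j) := by
      simp [Finset.mul_sum]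
    rw [this]
  rw [Finset.sum_congr rfl (fun i _ => h i)]
  rw [Finset.sum_add_distrib, Finset.sum_sub_distrib, Finset.sum_const,
    Finset.card_univ, Fintype.card_fin, nsmul_eq_mul, ← Finset.mul_sum]
  have : ∑ i : Fin n, 2 * (y i * ∑ j, y j) = 2 * ((∑ i, y i) * (∑ j, y j)) := by
    rw [← Finset.mul_sum, ← Finset.sum_mul]
  rw [this]; ring

private lemma nm_cs (n : ℕ) (y : Fin n → ℝ) :
    (∑ i, y i)^2 ≤ (n : ℝ) * ∑ i, (y i)^2 ∧
    ((∑ i, y i)^2 = (n : ℝ) * ∑ i, (y i)^2 ↔ ∀ i j, y i = y j) := by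
  have key := nm_sum_sq_identity n y
  have hnn : (0:ℝ) ≤ ∑ i, ∑ j, (y i - y j)^2 :=
    Finset.sum_nonneg fun i _ => Finset.sum_nonneg fun j _ => sq_nonneg _
  constructor
  · nlinarith
  constructor
  · intro he
    have hz : ∑ i : Fin n, ∑ j : Fin n, (y i - y j)^2 = 0 := by rw [key]; rw [he]; ring
    intro i j
    have h1 : ∀ i : Fin n, i ∈ Finset.univ → (0:ℝ) ≤ ∑ j, (y i - y j)^2 :=
      fun i _ => Finset.sum_nonneg fun j _ => sq_nonneg _
    have h2 := (Finset.sum_eq_zero_iff_of_nonneg h1).mp hz i (Finset.mem_univ i)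
    have h3 := (Finset.sum_eq_zero_iff_of_nonneg
      (fun j _ => sq_nonneg (y i - y j))).mp h2 j (Finset.mem_univ j)
    have := pow_eq_zero_iff (n := 2) (by norm_num) |>.mp h3
    linarith
  · intro hc
    have hz : ∑ i : Fin n, ∑ j : Fin n, (y i - y j)^2 = 0 :=
      Finset.sum_eq_zero fun i _ => Finset.sum_eq_zero fun j _ => by
        rw [hc i j]; ring
    rw [hz] at key
    linarith

private lemma quad_div (S Q c2 nn : ℝ) (hnn : 2 ≤ nn) (hc2 : c2 * 2 = nn * (nn - 1))
    (hCS : S^2 ≤ nn * Q) : (S^2 - Q)/2/c2 ≤ (S/nn)^2 := by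
  have hc2pos : 0 < c2 := by nlinarith
  have hnnpos : 0 < nn := by linarith
  rw [div_div, div_pow, div_le_div_iff₀ (by positivity) (by positivity)]
  nlinarith [mul_le_mul_of_nonneg_left hCS (le_of_lt hnnpos)]

private lemma quad_div_eq (S Q c2 nn : ℝ) (hnn : 2 ≤ nn) (hc2 : c2 * 2 = nn * (nn - 1))
    (heq : (S^2 - Q)/2/c2 = (S/nn)^2) : S^2 = nn * Q := by
  have hc2pos : 0 < c2 := by nlinarith
  have hnnpos : 0 < nn := by linarith
  rw [div_div, div_pow, div_eq_div_iff (by positivity) (by positivity)] at heq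
  nlinarith [heq]

private lemma choose_two_cast (n : ℕ) (hn : 2 ≤ n) :
    (n.choose (n-2) : ℝ) * 2 = (n:ℝ) * ((n:ℝ) - 1) := by
  have h1 : n.choose (n-2) = n.choose 2 := Nat.choose_symm hn
  have h2 : Even ((n-1) * n) := by
    have := Nat.even_mul_succ_self (n-1)
    rwa [Nat.sub_add_cancel (by omega : 1 ≤ n)] at this
  have h3 : n.choose 2 * 2 = n * (n - 1) := by
    rw [Nat.choose_two_right, Nat.div_mul_cancel]
    rw [mul_comm]
    exact h2.two_dvd
  have h4 : ((n.choose 2 * 2 : ℕ) : ℝ) = ((n * (n-1) : ℕ) : ℝ) := by rw [h3]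
  push_cast [Nat.cast_sub (by omega : 1 ≤ n)] at h4
  rw [h1]; push_cast; linarith

open Finset in
private lemma esymm_pred (n : ℕ) (hn : 1 ≤ n) (x : Fin n → ℝ) :
    esymm n (n-1) x = ∑ i, ∏ k ∈ Finset.univ.erase i, x k := by
  rw [esymm_compl n 1 hn, Finset.powersetCard_one, Finset.sum_map]
  refine Finset.sum_congr rfl fun i _ => ?_
  congr 1
  simp [Finset.compl_singleton]

open Finset in
private lemma esymm_top_two (n : ℕ) (hn : 2 ≤ n) (x : Fin n → ℝ) :
    esymm n (n-2) x * esymm n n x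
      = esymm n 2 (fun i => ∏ k ∈ Finset.univ.erase i, x k) := by
  rw [esymm_compl n 2 (by omega), esymm_self, Finset.sum_mul]
  show _ = ∑ A ∈ (univ : Finset (Fin n)).powersetCard 2, _
  refine Finset.sum_congr rfl fun A hA => ?_
  rw [Finset.mem_powersetCard_univ] at hA
  obtain ⟨i, j, hij, rfl⟩ := Finset.card_eq_two.mp hA
  rw [Finset.prod_pair hij]
  have huniv : ∏ k, x k = (∏ k ∈ ({i, j} : Finset (Fin n)), x k)
      * ∏ k ∈ ({i, j} : Finset (Fin n))ᶜ, x k :=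
    (Finset.prod_mul_prod_compl _ _).symm
  have herase_i : Finset.univ.erase i = insert j (({i, j} : Finset (Fin n))ᶜ) := by
    ext k
    simp only [Finset.mem_erase, Finset.mem_univ, and_true, Finset.mem_insert,
      Finset.mem_compl, Finset.mem_singleton]
    by_cases hk : k = j
    · subst hk; simp [hij.symm]
    · simp only [hk, false_or]; try tauto
  have herase_j : Finset.univ.erase j = insert i (({i, j} : Finset (Fin n))ᶜ) := by
    ext k
    simp only [Finset.mem_erase, Finset.mem_univ, and_true, Finset.mem_insert,
      Finset.mem_compl, Finset.mem_singleton]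
    by_cases hk : k = i
    · subst hk; simp [hij]
    · simp only [hk, false_or]; try tauto
  have hjnot : j ∉ ({i, j} : Finset (Fin n))ᶜ := by simp
  have hinot : i ∉ ({i, j} : Finset (Fin n))ᶜ := by simp
  rw [herase_i, herase_j, Finset.prod_insert hjnot, Finset.prod_insert hinot,
    huniv, Finset.prod_pair hij]
  ring

private lemma newton_top (n : ℕ) (hn : 2 ≤ n) (x : Fin n → ℝ) :
    esymm n (n-2) x / (n.choose (n-2) : ℝ) * (esymm n n x / (n.choose n : ℝ))
      ≤ (esymm n (n-1) x / (n.choose (n-1) : ℝ))^2 := by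
  set P : Fin n → ℝ := fun i => ∏ k ∈ Finset.univ.erase i, x k with hP
  have hS : esymm n (n-1) x = ∑ i, P i := esymm_pred n (by omega) x
  have hprod : esymm n (n-2) x * esymm n n x = ((∑ i, P i)^2 - ∑ i, (P i)^2)/2 := by
    rw [esymm_top_two n hn x]
    have := two_esymm_two n P
    linarith
  have hCS := (nm_cs n P).1
  have hc2 := choose_two_cast n hn
  have hc1 : (n.choose (n-1) : ℝ) = (n : ℝ) := by
    rw [show n - 1 = n - 1 from rfl, Nat.choose_symm (by omega : 1 ≤ n), Nat.choose_one_right]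
  have hcn : (n.choose n : ℝ) = 1 := by rw [Nat.choose_self]; norm_num
  rw [hc1, hcn, hS, div_one, div_mul_eq_mul_div, hprod]
  exact quad_div _ _ _ _ (by exact_mod_cast hn) hc2 hCS

private lemma newton_one (n : ℕ) (hn : 2 ≤ n) (x : Fin n → ℝ) :
    esymm n 0 x / (n.choose 0 : ℝ) * (esymm n 2 x / (n.choose 2 : ℝ))
      ≤ (esymm n 1 x / (n.choose 1 : ℝ))^2 := by
  have h2 : esymm n 2 x = ((∑ i, x i)^2 - ∑ i, (x i)^2)/2 := by
    have := two_esymm_two n x; linarith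
  have hc2 : (n.choose 2 : ℝ) * 2 = (n:ℝ) * ((n:ℝ) - 1) := by
    have := choose_two_cast n hn
    rwa [Nat.choose_symm hn] at this
  rw [esymm_zero', esymm_one', Nat.choose_zero_right, Nat.choose_one_right, h2]
  norm_num
  exact quad_div _ _ _ _ (by exact_mod_cast hn) hc2 (nm_cs n x).1

private lemma newton_one_eq (n : ℕ) (hn : 2 ≤ n) (x : Fin n → ℝ)
    (heq : esymm n 2 x / (n.choose 2 : ℝ) = (esymm n 1 x / (n.choose 1 : ℝ))^2) :
    ∀ i j, x i = x j := by
  have h2 : esymm n 2 x = ((∑ i, x i)^2 - ∑ i, (x i)^2)/2 := by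
    have := two_esymm_two n x; linarith
  have hc2 : (n.choose 2 : ℝ) * 2 = (n:ℝ) * ((n:ℝ) - 1) := by
    have := choose_two_cast n hn
    rwa [Nat.choose_symm hn] at this
  rw [esymm_one', Nat.choose_one_right, h2] at heq
  have := quad_div_eq _ _ _ _ (by exact_mod_cast hn : (2:ℝ) ≤ n) hc2 heq
  exact (nm_cs n x).2.mp this

open Polynomial in
private lemma derivative_step (n : ℕ) (hn : 1 ≤ n) (s : Multiset ℝ)
    (hcard : Multiset.card s = n) :
    ∃ t : Multiset ℝ, Multiset.card t = n - 1 ∧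
      ∀ j, j ≤ n - 1 → ((n:ℝ) - (j:ℝ)) * s.esymm j = (n:ℝ) * t.esymm j := by
  set P : ℝ[X] := (s.map fun r => X + C r).prod with hPdef
  have hmonic : P.Monic := monic_multiset_prod_of_monic _ _ fun a _ => monic_X_add_C a
  have hdeg : P.natDegree = n := by
    rw [hPdef, natDegree_multiset_prod_of_monic]
    · rw [Multiset.map_map]
      simp only [Function.comp, natDegree_X_add_C]
      rw [Multiset.map_const', Multiset.sum_replicate, hcard, smul_eq_mul, mul_one]
    · intro f hf
      obtain ⟨r, _, rfl⟩ := Multiset.mem_map.mp hf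
      exact monic_X_add_C r
  have hroots : P.roots = s.map fun r => -r := by
    rw [hPdef, roots_multiset_prod]
    · rw [Multiset.bind_map]
      have : ∀ r : ℝ, (X + C r).roots = {-r} := by
        intro r
        rw [show (X + C r : ℝ[X]) = X - C (-r) by rw [map_neg, sub_neg_eq_add]]
        exact roots_X_sub_C (-r)
      rw [Multiset.bind_congr (fun r _ => this r), Multiset.bind_singleton]
    · intro h0
      obtain ⟨r, _, hr⟩ := Multiset.mem_map.mp h0
      exact (monic_X_add_C r).ne_zero hr
  have hcroots : Multiset.card P.roots = n := by rw [hroots, Multiset.card_map, hcard]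
  set P' : ℝ[X] := derivative P with hP'def
  have hd1 : P'.natDegree ≤ n - 1 := by
    have := natDegree_derivative_le P
    rwa [hdeg] at this
  have hge : n - 1 ≤ Multiset.card P'.roots := by
    have := P.card_roots_le_derivative
    rw [hcroots, ← hP'def] at this
    omega
  have hcr : Multiset.card P'.roots = P'.natDegree :=
    le_antisymm (card_roots' P') (hd1.trans hge)
  have hdeg' : P'.natDegree = n - 1 := le_antisymm hd1 (hge.trans (card_roots' P'))
  have hsplits : Splits P' := splits_iff_card_roots.mpr hcr
  have heqP' : P' = C P'.leadingCoeff * (P'.roots.map fun a => X - C a).prod :=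
    (C_leadingCoeff_mul_prod_multiset_X_sub_C hcr).symm
  have hcoeffPn : P.coeff n = 1 := by
    have := hmonic.coeff_natDegree
    rwa [hdeg] at this
  have hlead : P'.leadingCoeff = (n:ℝ) := by
    rw [Polynomial.leadingCoeff, hdeg', hP'def, coeff_derivative,
      show n - 1 + 1 = n from by omega, hcoeffPn, one_mul]
    have : ((n - 1 : ℕ) : ℝ) = (n:ℝ) - 1 := by
      rw [Nat.cast_sub hn]; norm_num
    rw [this]; ring
  refine ⟨P'.roots.map fun r => -r, by rw [Multiset.card_map, hcr, hdeg'], ?_⟩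
  intro j hj
  have hQ : P' = C (n:ℝ) * (((P'.roots.map fun r => -r).map fun r => X + C r).prod) := by
    rw [Multiset.map_map]
    have : ((fun r => X + C r) ∘ fun r => -r) = fun a : ℝ => X - C a := by
      funext a; simp [sub_eq_add_neg]
    rw [this, ← hlead, ← heqP']
  -- coefficient at n - 1 - j, from derivative formula
  have hL : P'.coeff (n - 1 - j) = s.esymm j * ((n:ℝ) - (j:ℝ)) := by
    rw [hP'def, coeff_derivative, show n - 1 - j + 1 = n - j from by omega]
    have h1 : P.coeff (n - j) = s.esymm j := by
      rw [hPdef, Multiset.prod_X_add_C_coeff s (by omega : n - j ≤ Multiset.card s), hcard,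
        show n - (n - j) = j from by omega]
    have h2 : ((n - 1 - j : ℕ) : ℝ) + 1 = (n:ℝ) - (j:ℝ) := by
      rw [show n - 1 - j = n - (j+1) from by omega, Nat.cast_sub (by omega : j + 1 ≤ n)]
      push_cast; ring
    rw [h1, h2]
  have hR : P'.coeff (n - 1 - j)
      = (n:ℝ) * (P'.roots.map fun r => -r).esymm j := by
    conv_lhs => rw [hQ]
    rw [coeff_C_mul]
    congr 1
    rw [Multiset.prod_X_add_C_coeff _ (by rw [Multiset.card_map, hcr, hdeg']; omega),
      Multiset.card_map, hcr, hdeg', show n - 1 - (n - 1 - j) = j from by omega]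
  rw [mul_comm, ← hL]; exact hR

private lemma choose_ratio (n j : ℕ) (hn : 1 ≤ n) (hj : j ≤ n - 1) :
    ((n:ℝ) - (j:ℝ)) * (n.choose j : ℝ) = (n:ℝ) * ((n-1).choose j : ℝ) := by
  have h1 : n.choose (j+1) * (j+1) = n.choose j * (n - j) := Nat.choose_succ_right_eq n j
  have h2 : n * (n-1).choose j = n.choose (j+1) * (j+1) := by
    have := Nat.add_one_mul_choose_eq (n-1) j
    rwa [Nat.sub_add_cancel hn] at this
  have h3 : n.choose j * (n - j) = n * (n-1).choose j := by omega
  have := congrArg (fun z : ℕ => (z : ℝ)) h3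
  push_cast [Nat.cast_sub (by omega : j ≤ n)] at this
  linarith

private lemma pres (n j : ℕ) (hn : 1 ≤ n) (hj : j ≤ n - 1) (s t : Multiset ℝ)
    (hrel : ((n:ℝ) - (j:ℝ)) * s.esymm j = (n:ℝ) * t.esymm j) :
    s.esymm j / (n.choose j : ℝ) = t.esymm j / (((n-1)).choose j : ℝ) := by
  have hcnj : 0 < (n.choose j : ℝ) := by
    exact_mod_cast Nat.choose_pos (by omega : j ≤ n)
  have hcn1j : 0 < (((n-1)).choose j : ℝ) := by
    exact_mod_cast Nat.choose_pos hj
  have hkey := choose_ratio n j hn hj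
  have hn0 : (0:ℝ) < n := by exact_mod_cast hn
  rw [div_eq_div_iff (ne_of_gt hcnj) (ne_of_gt hcn1j)]
  have : (n:ℝ) * (s.esymm j * ((n-1).choose j : ℝ)) = (n:ℝ) * (t.esymm j * (n.choose j : ℝ)) := by
    linear_combination ((n.choose j : ℝ)) * hrel - s.esymm j * hkey
  exact mul_left_cancel₀ (ne_of_gt hn0) this

private lemma multiset_exists_fn (s : Multiset ℝ) :
    ∃ f : Fin (Multiset.card s) → ℝ, s = Multiset.map f Finset.univ.val := by
  induction s using Quotient.inductionOn with
  | h l =>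
    refine ⟨fun i => l.get (Fin.cast (Multiset.coe_card l) i), Eq.symm ?_⟩
    have h1 : (Finset.univ : Finset (Fin (Multiset.card ⟦l⟧))).val
        = ((List.finRange (Multiset.card ⟦l⟧) : List (Fin _)) : Multiset (Fin _)) := by
      rw [Fin.univ_def]
    rw [h1, Multiset.map_coe]
    exact congrArg _ (List.map_get_finRange l)

private lemma multiset_exists_fn' (n : ℕ) (s : Multiset ℝ) (h : Multiset.card s = n) :
    ∃ f : Fin n → ℝ, s = Multiset.map f Finset.univ.val := by
  subst h; exact multiset_exists_fn s

private lemma newton_multiset (k : ℕ) (hk : 1 ≤ k) (n : ℕ) (hn : k + 1 ≤ n)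
    (s : Multiset ℝ) (hcard : Multiset.card s = n) :
    s.esymm (k-1) / (n.choose (k-1) : ℝ) * (s.esymm (k+1) / (n.choose (k+1) : ℝ))
      ≤ (s.esymm k / (n.choose k : ℝ))^2 := by
  induction n, hn using Nat.le_induction generalizing s with
  | base =>
    obtain ⟨f, hf⟩ := multiset_exists_fn' (k+1) s hcard
    rw [hf]
    simp only [esymm_multiset]
    have := newton_top (k+1) (by omega) f
    rw [show k+1-2 = k-1 from by omega, show k+1-1 = k from by omega] at this
    exact this
  | succ n hn ih =>
    obtain ⟨t, htcard, hrel⟩ := derivative_step (n+1) (by omega) s hcard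
    rw [show n+1-1 = n from rfl] at htcard hrel
    have e1 := pres (n+1) (k-1) (by omega) (by omega) s t (hrel (k-1) (by omega))
    have e2 := pres (n+1) k (by omega) (by omega) s t (hrel k (by omega))
    have e3 := pres (n+1) (k+1) (by omega) (by omega) s t (hrel (k+1) (by omega))
    rw [show n+1-1 = n from rfl] at e1 e2 e3
    rw [e1, e2, e3]
    exact ih t htcard
private lemma pow_inj' (a b : ℝ) (k : ℕ) (ha : 0 ≤ a) (hb : 0 ≤ b) (hk : k ≠ 0)
    (h : a^k = b^k) : a = b :=
  le_antisymm ((pow_le_pow_iff_left₀ ha hb hk).mp h.le)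
    ((pow_le_pow_iff_left₀ hb ha hk).mp h.ge)

theorem newton_maclaurin (n l m : ℕ) (x : Fin n → ℝ)
    (hl : 1 ≤ l) (hlm : l < m) (hmn : m ≤ n)
    (hΓ : ∀ i : ℕ, 1 ≤ i → i ≤ m - 1 → 0 < esymm n i x) :
    esymm n m x ≤ (n.choose m : ℝ) *
        (esymm n l x / (n.choose l : ℝ)) ^ ((m : ℝ) / l) ∧
      (esymm n m x = (n.choose m : ℝ) *
          (esymm n l x / (n.choose l : ℝ)) ^ ((m : ℝ) / l) ↔
        ∃ c : ℝ, 0 < c ∧ x = fun _ => c) := by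
  have hm2 : 2 ≤ m := by omega
  have hn2 : 2 ≤ n := le_trans hm2 hmn
  set p : ℕ → ℝ := fun j => esymm n j x / (n.choose j : ℝ) with hpdef
  have hnewton : ∀ k : ℕ, 1 ≤ k → k + 1 ≤ n → p (k-1) * p (k+1) ≤ p k ^ 2 := by
    intro k h1 h2
    have hcard : Multiset.card (Multiset.map x Finset.univ.val) = n := by
      rw [Multiset.card_map]
      exact Finset.card_univ.trans (Fintype.card_fin n)
    have := newton_multiset k h1 n h2 (Multiset.map x Finset.univ.val) hcard
    simpa only [esymm_multiset, hpdef] using this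
  have hp0 : p 0 = 1 := by simp [hpdef, esymm_zero']
  have hppos : ∀ j, 1 ≤ j → j ≤ m - 1 → 0 < p j := by
    intro j h1 h2
    apply div_pos (hΓ j h1 h2)
    exact_mod_cast Nat.choose_pos (by omega : j ≤ n)
  set q : ℕ → ℝ := fun j => p j ^ ((j:ℝ)⁻¹) with hqdef
  have hqpos : ∀ j, 1 ≤ j → j ≤ m-1 → 0 < q j :=
    fun j h1 h2 => Real.rpow_pos_of_pos (hppos j h1 h2) _
  have hqpow : ∀ j, 1 ≤ j → j ≤ m-1 → q j ^ j = p j := by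
    intro j h1 h2
    have hj0 : (j:ℝ) ≠ 0 := Nat.cast_ne_zero.mpr (by omega)
    show (p j ^ ((j:ℝ)⁻¹)) ^ j = p j
    rw [← Real.rpow_natCast (p j ^ ((j:ℝ)⁻¹)) j, ← Real.rpow_mul (le_of_lt (hppos _ h1 h2)),
      inv_mul_cancel₀ hj0, Real.rpow_one]
  have hchain : ∀ k, 2 ≤ k → k ≤ m-1 → q k ≤ q (k-1) := by
    intro k hk
    induction k, hk using Nat.le_induction with
    | base =>
      intro h2m
      have hN := hnewton 1 le_rfl (by omega)
      norm_num at hN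
      rw [hp0, one_mul] at hN
      have hq1' : q 1 = p 1 := by simpa using hqpow 1 (by omega) (by omega)
      have h2 : q 2 ^ 2 ≤ q 1 ^ 2 := by
        rw [hqpow 2 (by omega) h2m, hq1']
        exact hN
      exact (pow_le_pow_iff_left₀ (le_of_lt (hqpos 2 (by omega) h2m))
        (le_of_lt (hqpos 1 (by omega) (by omega))) (by norm_num)).mp h2
    | succ k hk ih =>
      intro hk1m
      have hkm : k ≤ m - 1 := by omega
      have hih := ih hkm
      have hN := hnewton k (by omega) (by omega)
      have hqk : 0 < q k := hqpos k (by omega) hkm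
      have hA : q k ^ (k-1) ≤ p (k-1) := by
        rw [← hqpow (k-1) (by omega) (by omega)]
        exact pow_le_pow_left₀ (le_of_lt hqk) hih _
      have hB : q k ^ (k-1) * p (k+1) ≤ q k ^ (k-1) * q k ^ (k+1) := by
        calc q k ^ (k-1) * p (k+1) ≤ p (k-1) * p (k+1) :=
              mul_le_mul_of_nonneg_right hA (le_of_lt (hppos (k+1) (by omega) hk1m))
          _ ≤ p k ^ 2 := hN
          _ = q k ^ (k-1) * q k ^ (k+1) := by
              rw [← hqpow k (by omega) hkm, ← pow_mul, ← pow_add]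
              congr 1
              omega
      have hC : p (k+1) ≤ q k ^ (k+1) :=
        le_of_mul_le_mul_left hB (pow_pos hqk _)
      have h2 : q (k+1) ^ (k+1) ≤ q k ^ (k+1) := by
        rw [hqpow (k+1) (by omega) hk1m]; exact hC
      have h3 := (pow_le_pow_iff_left₀ (le_of_lt (hqpos (k+1) (by omega) hk1m))
        (le_of_lt hqk) (by omega)).mp h2
      simpa using h3
  have hmono : ∀ j k, 1 ≤ j → j ≤ k → k ≤ m-1 → q k ≤ q j := by
    intro j k h1 hjk
    induction k, hjk using Nat.le_induction with
    | base => intro _; exact le_rfl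
    | succ k hk ih =>
      intro hk1
      calc q (k+1) ≤ q k := by
            have := hchain (k+1) (by omega) hk1
            simpa using this
        _ ≤ q j := ih (by omega)
  have hqm1 : 0 < q (m-1) := hqpos (m-1) (by omega) le_rfl
  have hAtop : q (m-1) ^ (m-2) ≤ p (m-2) := by
    rcases Nat.eq_or_lt_of_le hm2 with h | h
    · rw [show m - 2 = 0 from by omega, pow_zero, hp0]
    · rw [← hqpow (m-2) (by omega) (by omega)]
      exact pow_le_pow_left₀ (le_of_lt hqm1) (hmono (m-2) (m-1) (by omega) (by omega) le_rfl) _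
  have hNtop := hnewton (m-1) (by omega) (by omega : (m-1) + 1 ≤ n)
  rw [show m - 1 - 1 = m - 2 from by omega, show m - 1 + 1 = m from by omega] at hNtop
  have hsq : p (m-1) ^ 2 = q (m-1) ^ (m-2) * q (m-1) ^ m := by
    rw [← hqpow (m-1) (by omega) le_rfl, ← pow_mul, ← pow_add]
    congr 1
    omega
  have htople : p m ≤ q (m-1) ^ m := by
    rcases le_or_gt (p m) 0 with hpm | hpm
    · exact le_trans hpm (le_of_lt (pow_pos hqm1 _))
    · have hB : q (m-1) ^ (m-2) * p m ≤ q (m-1) ^ (m-2) * q (m-1) ^ m := by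
        calc q (m-1) ^ (m-2) * p m ≤ p (m-2) * p m :=
              mul_le_mul_of_nonneg_right hAtop (le_of_lt hpm)
          _ ≤ p (m-1) ^ 2 := hNtop
          _ = _ := hsq
      exact le_of_mul_le_mul_left hB (pow_pos hqm1 _)
  have htopeq : p m = q (m-1) ^ m → p (m-2) = q (m-1) ^ (m-2) := by
    intro heq
    have hpm : 0 < p m := heq ▸ pow_pos hqm1 _
    have hle : p (m-2) * p m ≤ q (m-1) ^ (m-2) * p m := by
      calc p (m-2) * p m ≤ p (m-1)^2 := hNtop
        _ = q (m-1) ^ (m-2) * q (m-1) ^ m := hsq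
        _ = q (m-1) ^ (m-2) * p m := by rw [heq]
    exact le_antisymm (le_of_mul_le_mul_right hle hpm) hAtop
  have hql : 0 < q l := hqpos l hl (by omega)
  have hlq : (p l) ^ ((m:ℝ)/(l:ℝ)) = q l ^ m := by
    rw [show (m:ℝ)/(l:ℝ) = (l:ℝ)⁻¹ * (m:ℝ) by ring,
      Real.rpow_mul (le_of_lt (hppos l hl (by omega))), Real.rpow_natCast]
  have hqlm : p m ≤ q l ^ m := by
    calc p m ≤ q (m-1) ^ m := htople
      _ ≤ q l ^ m := pow_le_pow_left₀ (le_of_lt hqm1)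
          (hmono l (m-1) hl (by omega) le_rfl) _
  have hNm : (0:ℝ) < (n.choose m : ℝ) := by
    exact_mod_cast Nat.choose_pos hmn
  constructor
  · rw [hlq, mul_comm, ← div_le_iff₀ hNm]
    exact hqlm
  constructor
  · intro heq
    have hpmeq : p m = q l ^ m := by
      show esymm n m x / (n.choose m : ℝ) = _
      rw [heq, hlq]
      field_simp
    have h2 : q (m-1) ^ m ≤ q l ^ m := pow_le_pow_left₀ (le_of_lt hqm1)
      (hmono l (m-1) hl (by omega) le_rfl) _
    have h1 : p m = q (m-1) ^ m := by linarith [htople]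
    have hq1 : q 1 = p 1 := by
      have := hqpow 1 le_rfl (by omega)
      simpa using this
    have hkey : p 2 = p 1 ^ 2 := by
      rcases Nat.eq_or_lt_of_le hm2 with hm2' | hm3
      · have hmm : m = 2 := hm2'.symm
        have hl1 : l = 1 := by omega
        rw [hmm, hl1] at hpmeq
        rw [hpmeq, hq1]
      · have hstep := htopeq h1
        have hqq : q (m-2) = q (m-1) := by
          apply pow_inj' _ _ (m-2) (le_of_lt (hqpos (m-2) (by omega) (by omega)))
            (le_of_lt hqm1) (by omega)
          rw [hqpow (m-2) (by omega) (by omega)]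
          exact hstep
        have hdown : ∀ k, 1 ≤ k → (k ≤ m-2 → q k = q (k+1) → q 1 = q 2) := by
          intro k hk
          induction k, hk using Nat.le_induction with
          | base => intro _ h; exact h
          | succ k hk ih =>
            intro hk1 hE
            have hqk1 : 0 < q (k+1) := hqpos (k+1) (by omega) (by omega)
            have hN := hnewton (k+1) (by omega) (by omega)
            rw [show k+1-1 = k from by omega] at hN
            have hpk2 : p (k+2) = q (k+1) ^ (k+2) := by
              rw [← hqpow (k+2) (by omega) (by omega), ← hE]
            have hApk : q (k+1) ^ k ≤ p k := by
              rw [← hqpow k (by omega) (by omega)]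
              exact pow_le_pow_left₀ (le_of_lt hqk1)
                (hmono k (k+1) (by omega) (by omega) (by omega)) _
            have hsq2 : p (k+1) ^ 2 = q (k+1) ^ k * q (k+1) ^ (k+2) := by
              rw [← hqpow (k+1) (by omega) (by omega), ← pow_mul, ← pow_add]
              congr 1
              omega
            rw [show k+1+1 = k+2 from by omega, hpk2] at hN
            have hle1 : p k * q (k+1) ^ (k+2) ≤ q (k+1) ^ k * q (k+1) ^ (k+2) := by
              rw [← hsq2]
              exact hN
            have hle2 : q (k+1) ^ k * q (k+1) ^ (k+2) ≤ p k * q (k+1) ^ (k+2) :=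
              mul_le_mul_of_nonneg_right hApk (le_of_lt (pow_pos hqk1 _))
            have hpk : p k = q (k+1) ^ k :=
              mul_right_cancel₀ (ne_of_gt (pow_pos hqk1 _)) (le_antisymm hle1 hle2)
            have hqeq : q k = q (k+1) := by
              apply pow_inj' _ _ k (le_of_lt (hqpos k (by omega) (by omega)))
                (le_of_lt hqk1) (by omega)
              rw [hqpow k (by omega) (by omega)]
              exact hpk
            exact ih (by omega) hqeq
        have hq12 : q 1 = q 2 := by
          rcases Nat.eq_or_lt_of_le (show 3 ≤ m from hm3) with hm3' | hm4
          · have e1 : m - 2 = 1 := by omega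
            have e2 : m - 1 = 2 := by omega
            rw [e1, e2] at hqq
            exact hqq
          · exact hdown (m-2) (by omega) le_rfl (by
              rw [show m-2+1 = m-1 from by omega]; exact hqq)
        have hq2 : q 2 ^ 2 = p 2 := hqpow 2 (by omega) (by omega)
        rw [← hq2, ← hq12, hq1]
    have hall : ∀ i j, x i = x j := by
      apply newton_one_eq n hn2 x
      have h5 : p 2 = p 1 ^ 2 := hkey
      rw [hpdef] at h5
      simpa using h5
    have hnpos : 0 < n := by omega
    set c := x ⟨0, hnpos⟩ with hc
    have hxc : x = fun _ => c := funext fun i => hall i ⟨0, hnpos⟩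
    have hsum : esymm n 1 x = (n:ℝ) * c := by
      rw [esymm_one', hxc]
      simp [Finset.sum_const, Finset.card_univ, nsmul_eq_mul]
    have hcpos : 0 < c := by
      have h1' := hΓ 1 le_rfl (by omega)
      rw [hsum] at h1'
      by_contra hcon
      push_neg at hcon
      nlinarith [show (0:ℝ) < (n:ℝ) from by exact_mod_cast hnpos]
    exact ⟨c, hcpos, hxc⟩
  · rintro ⟨c, hc, rfl⟩
    rw [esymm_const n m c, esymm_const n l c]
    have hNl : (0:ℝ) < (n.choose l : ℝ) := by
      exact_mod_cast Nat.choose_pos (by omega : l ≤ n)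
    have hcl : (n.choose l : ℝ) * c ^ l / (n.choose l : ℝ) = c ^ l := by
      field_simp
    rw [hcl]
    congr 1
    rw [← Real.rpow_natCast c l, ← Real.rpow_mul (le_of_lt hc),
      show (l:ℝ) * ((m:ℝ)/(l:ℝ)) = (m:ℝ) from by
        field_simp, Real.rpow_natCast]
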